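/- Let P be a simple convex polytope of dimension n that is flag and has exactly 2n facets. Then P is combinatorially equivalent to the n-cube. Equivalently (dually): a flag simplicial (n−1)-sphere with exactly 2n vertices is isomorphic to the boundary complex of the n-dimensional crosspolytope (the n-fold join of S^0). -/

import Mathlib

/-- An abstract simplicial complex on the vertex set `V` (with every point of `V`
a vertex), given by its set of faces. -/
structure SimplicialCx (V : Type*) where
  faces : Set (Finset V)
  downward : ∀ s ∈ faces, ∀ t : Finset V, t ⊆ s → t ∈ faces
  vertex : ∀ v : V, ({v} : Finset V) ∈ faces

/-- A simplicial complex is flag if every set of vertices which are pairwise joined by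
edges spans a face. -/
def SimplicialCx.Flag {V : Type*} [DecidableEq V] (K : SimplicialCx V) : Prop :=
  ∀ s : Finset V, (∀ u ∈ s, ∀ v ∈ s, u ≠ v → ({u, v} : Finset V) ∈ K.faces) → s ∈ K.faces

/-- `K` is a closed pseudomanifold of dimension `n - 1` (so facets have `n` vertices):
it is pure of dimension `n - 1`, every ridge lies in exactly two facets, and it is
strongly connected. -/
def SimplicialCx.Pseudomanifold {V : Type*} [DecidableEq V] (K : SimplicialCx V) (n : ℕ) : Prop :=
  (∀ s ∈ K.faces, s.card ≤ n) ∧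
  (∀ s ∈ K.faces, ∃ t ∈ K.faces, s ⊆ t ∧ t.card = n) ∧
  (∀ s ∈ K.faces, s.card = n - 1 →
    {t | t ∈ K.faces ∧ t.card = n ∧ s ⊆ t}.ncard = 2) ∧
  (∀ t₁ ∈ K.faces, ∀ t₂ ∈ K.faces, t₁.card = n → t₂.card = n →
    Relation.ReflTransGen
      (fun a b : Finset V => a ∈ K.faces ∧ b ∈ K.faces ∧ a.card = n ∧ b.card = n ∧
        (a ∩ b).card = n - 1) t₁ t₂)


/-!
For a face `σ` let `L(σ)` be the vertex set of its link. If `σ` is not a facet, pick `v ∈ L(σ)`.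
By flagness `v` has a non-neighbour `w` in the link: otherwise `v` would lie in every facet
through `σ`, and the ridge opposite to `v` in such a facet would lie in only one facet. As
`L(σ ∪ {v}) ⊆ L(σ) \ {v, w}`, induction gives `|L(σ)| ≥ 2 (n - |σ|)`. For `σ = {v}` and `2n`
vertices in all, this leaves room for exactly one non-neighbour `a v` of each vertex `v`. So `a` is
a fixed-point-free involution, and by flagness the faces are the sets containing no pair
`{v, a v}`; numbering these pairs identifies `K` with the boundary of the crosspolytope.
-/

namespace SimplicialCx

open Finset

variable {V : Type*} [DecidableEq V] {K : SimplicialCx V} {n : ℕ}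

theorem pair_mem_faces {s : Finset V} (hs : s ∈ K.faces) {u w : V} (hu : u ∈ s) (hw : w ∈ s) :
    ({u, w} : Finset V) ∈ K.faces :=
  K.downward s hs _ (insert_subset hu (singleton_subset_iff.2 hw))

theorem Flag.insert_mem_faces (hK : K.Flag) {t : Finset V} (ht : t ∈ K.faces) {v : V}
    (hv : ∀ x ∈ t, x ≠ v → ({v, x} : Finset V) ∈ K.faces) : insert v t ∈ K.faces := by
  refine hK _ fun x hx y hy hxy => ?_
  rcases mem_insert.1 hx with rfl | hxt
  · rcases mem_insert.1 hy with rfl | hyt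
    · exact absurd rfl hxy
    · exact hv y hyt (Ne.symm hxy)
  · rcases mem_insert.1 hy with rfl | hyt
    · rw [pair_comm]; exact hv x hxt hxy
    · exact pair_mem_faces ht hxt hyt

theorem Flag.mem_faces_iff (hK : K.Flag) {s : Finset V} :
    s ∈ K.faces ↔ ∀ u ∈ s, ∀ w ∈ s, u ≠ w → ({u, w} : Finset V) ∈ K.faces :=
  ⟨fun hs _ hu _ hw _ => pair_mem_faces hs hu hw, hK s⟩

structure WeakPseudomanifold (K : SimplicialCx V) (n : ℕ) : Prop where
  card_le : ∀ s ∈ K.faces, s.card ≤ n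
  exists_facet : ∀ s ∈ K.faces, ∃ t ∈ K.faces, s ⊆ t ∧ t.card = n
  ncard_facets_of_ridge : ∀ s ∈ K.faces, s.card = n - 1 →
    {t | t ∈ K.faces ∧ t.card = n ∧ s ⊆ t}.ncard = 2

theorem Pseudomanifold.weakPseudomanifold (hK : K.Pseudomanifold n) :
    K.WeakPseudomanifold n :=
  ⟨hK.1, hK.2.1, hK.2.2.1⟩

noncomputable def linkVertices [Fintype V] (K : SimplicialCx V) (σ : Finset V) : Finset V := by
  classical exact univ.filter fun u => u ∉ σ ∧ insert u σ ∈ K.faces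

theorem mem_linkVertices [Fintype V] {σ : Finset V} {u : V} :
    u ∈ K.linkVertices σ ↔ u ∉ σ ∧ insert u σ ∈ K.faces := by
  simp [linkVertices]

namespace WeakPseudomanifold

variable [Fintype V]

theorem exists_nonadjacent_in_link (hK : K.WeakPseudomanifold n) (hflag : K.Flag)
    {σ : Finset V} {v : V} (hv : v ∈ K.linkVertices σ) :
    ∃ w ∈ K.linkVertices σ, w ≠ v ∧ insert w (insert v σ) ∉ K.faces := by
  by_contra! hadj
  obtain ⟨hvσ, hvface⟩ := mem_linkVertices.1 hv
  have hmem : ∀ t ∈ K.faces, t.card = n → σ ⊆ t → v ∈ t := by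
    intro t ht htc hσt
    by_contra hvt
    have hins : insert v t ∈ K.faces := by
      refine hflag.insert_mem_faces ht fun x hx hxv => ?_
      by_cases hxσ : x ∈ σ
      · exact pair_mem_faces hvface (mem_insert_self v σ) (mem_insert_of_mem hxσ)
      · have hx : x ∈ K.linkVertices σ := mem_linkVertices.2
          ⟨hxσ, K.downward t ht _ (insert_subset hx hσt)⟩
        exact pair_mem_faces (hadj x hx hxv) (mem_insert_of_mem (mem_insert_self v σ))
          (mem_insert_self x _)
    have := hK.card_le _ hins
    rw [card_insert_of_notMem hvt, htc] at this
    omega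
  obtain ⟨t, ht, hvσt, htc⟩ := hK.exists_facet _ hvface
  have hvt : v ∈ t := hvσt (mem_insert_self v σ)
  have hσr : σ ⊆ t.erase v := fun x hx =>
    mem_erase.2 ⟨fun h => hvσ (h ▸ hx), hvσt (mem_insert_of_mem hx)⟩
  have hunique : ∀ t' ∈ K.faces, t'.card = n → t.erase v ⊆ t' → t' = t := by
    intro t' ht' ht'c hrt'
    have ht't : t ⊆ t' := by
      rw [← insert_erase hvt]
      exact insert_subset (hmem t' ht' ht'c (hσr.trans hrt')) hrt'
    exact (eq_of_subset_of_card_le ht't (by omega)).symm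
  obtain ⟨t₁, t₂, hne, hfacets⟩ := Set.ncard_eq_two.1 (hK.ncard_facets_of_ridge _
    (K.downward t ht _ (erase_subset v t)) (by rw [card_erase_of_mem hvt, htc]))
  have h₁ : t₁ ∈ {t' | t' ∈ K.faces ∧ t'.card = n ∧ t.erase v ⊆ t'} := by simp [hfacets]
  have h₂ : t₂ ∈ {t' | t' ∈ K.faces ∧ t'.card = n ∧ t.erase v ⊆ t'} := by simp [hfacets]
  exact hne ((hunique t₁ h₁.1 h₁.2.1 h₁.2.2).trans (hunique t₂ h₂.1 h₂.2.1 h₂.2.2).symm)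

theorem two_mul_sub_card_le_card_linkVertices (hK : K.WeakPseudomanifold n) (hflag : K.Flag)
    {σ : Finset V} (hσ : σ ∈ K.faces) : 2 * (n - σ.card) ≤ (K.linkVertices σ).card := by
  induction hk : n - σ.card generalizing σ with
  | zero => simp
  | succ k ih =>
    obtain ⟨t, ht, hσt, htc⟩ := hK.exists_facet σ hσ
    obtain ⟨v, hvt, hvσ⟩ :=
      exists_of_ssubset (ssubset_of_subset_of_ne hσt (by rintro rfl; omega))
    have hv : v ∈ K.linkVertices σ :=
      mem_linkVertices.2 ⟨hvσ, K.downward t ht _ (insert_subset hvt hσt)⟩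
    obtain ⟨w, hw, hwv, hvw⟩ := hK.exists_nonadjacent_in_link hflag hv
    have hsub : K.linkVertices (insert v σ) ⊆ ((K.linkVertices σ).erase v).erase w := by
      intro u hu
      obtain ⟨huvσ, hface⟩ := mem_linkVertices.1 hu
      have huσ : u ∈ K.linkVertices σ := mem_linkVertices.2 ⟨fun h => huvσ (mem_insert_of_mem h),
        K.downward _ hface _ (insert_subset_insert u (subset_insert v σ))⟩
      exact mem_erase.2 ⟨fun huw => hvw (huw ▸ hface),
        mem_erase.2 ⟨fun huv => huvσ (huv ▸ mem_insert_self v σ), huσ⟩⟩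
    have := card_le_card hsub
    have := card_erase_add_one (mem_erase.2 ⟨hwv, hw⟩)
    have := card_erase_add_one hv
    have := ih (mem_linkVertices.1 hv).2 (by rw [card_insert_of_notMem hvσ]; omega)
    omega

theorem existsUnique_nonadjacent (hK : K.WeakPseudomanifold n) (hflag : K.Flag)
    (hcard : Fintype.card V = 2 * n) (v : V) :
    ∃! w, w ≠ v ∧ ({v, w} : Finset V) ∉ K.faces := by
  have hv : v ∈ K.linkVertices ∅ :=
    mem_linkVertices.2 ⟨notMem_empty v, by simpa using K.vertex v⟩
  obtain ⟨w, -, hwv, hw⟩ := hK.exists_nonadjacent_in_link hflag hv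
  refine ⟨w, ⟨hwv, by simpa [pair_comm] using hw⟩, fun w' ⟨hw'v, hw'⟩ => ?_⟩
  by_contra hw'w
  have hsub : K.linkVertices {v} ⊆ ((univ.erase v).erase w).erase w' := by
    intro u hu
    obtain ⟨huv, hface⟩ := mem_linkVertices.1 hu
    have hnonadj : ∀ x, ({v, x} : Finset V) ∉ K.faces → u ≠ x := by
      rintro x hx rfl
      exact hx (by rwa [pair_comm])
    simp only [mem_erase, mem_univ, and_true]
    exact ⟨hnonadj w' hw', hnonadj w (by simpa [pair_comm] using hw), fun h => huv (by simp [h])⟩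
  have hlink := hK.two_mul_sub_card_le_card_linkVertices hflag (K.vertex v)
  have hn := hK.card_le _ (K.vertex v)
  have := card_le_card hsub
  have := card_erase_add_one (s := (univ.erase v).erase w) (a := w') (by simp [hw'w, hw'v])
  have := card_erase_add_one (s := univ.erase v) (a := w) (by simp [hwv])
  have := card_erase_add_one (mem_univ v)
  rw [card_univ, hcard] at this
  simp only [card_singleton] at hlink hn
  omega

end WeakPseudomanifold

theorem Flag.mem_faces_iff_of_antipode (hK : K.Flag) {a : V → V} (hfix : ∀ u, a u ≠ u)
    (ha : ∀ u w, u ≠ w → (({u, w} : Finset V) ∈ K.faces ↔ w ≠ a u)) (s : Finset V) :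
    s ∈ K.faces ↔ ∀ u ∈ s, a u ∉ s := by
  rw [hK.mem_faces_iff]
  refine ⟨fun h u hu hau => ?_, fun h u hu w hw huw => (ha u w huw).2 ?_⟩
  · exact (ha u (a u) (hfix u).symm).1 (h u hu (a u) hau (hfix u).symm) rfl
  · rintro rfl; exact h u hu hw

end SimplicialCx

namespace Function.Involutive

variable {α : Type*} {a : α → α}

def equivSubtypeProdBool (ha : Involutive a) {p : α → Prop} [DecidablePred p]
    (hp : ∀ x, ¬p x ↔ p (a x)) : α ≃ {x // p x} × Bool where
  toFun x := if h : p x then (⟨x, h⟩, true) else (⟨a x, (hp x).1 h⟩, false)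
  invFun y := if y.2 then y.1 else a y.1
  left_inv x := by by_cases h : p x <;> simp [h, ha x]
  right_inv := by
    rintro ⟨⟨x, hx⟩, _ | _⟩
    · have hax : ¬p (a x) := (hp (a x)).2 (by rwa [ha x])
      simp [hax, ha x]
    · simp [hx]

theorem exists_equiv_fin_prod_bool [Fintype α] (ha : Involutive a) (hfix : ∀ x, a x ≠ x)
    {n : ℕ} (hcard : Fintype.card α = 2 * n) :
    ∃ e : α ≃ Fin n × Bool, ∀ y, a (e.symm y) = e.symm (y.1, !y.2) := by
  classical
  let : LinearOrder α := LinearOrder.lift' _ (Fintype.equivFin α).injective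
  have hp : ∀ x, ¬x < a x ↔ a x < a (a x) := fun x => by
    rw [ha x, not_lt, lt_iff_le_and_ne]
    exact ⟨fun h => ⟨h, hfix x⟩, And.left⟩
  let e := ha.equivSubtypeProdBool hp
  have hT : Fintype.card {x // x < a x} = n := by
    have := Fintype.card_congr e
    rw [Fintype.card_prod, Fintype.card_bool] at this
    omega
  refine ⟨e.trans ((Fintype.equivFinOfCardEq hT).prodCongr (Equiv.refl Bool)), ?_⟩
  rintro ⟨i, _ | _⟩ <;> simp [e, equivSubtypeProdBool, ha _]

end Function.Involutive

open SimplicialCx in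
theorem flag_pseudomanifold_card_eq_is_crosspolytope_general (V : Type*) [DecidableEq V]
    [Fintype V] (n : ℕ) (K : SimplicialCx V)
    (hflag : K.Flag) (hpm : K.Pseudomanifold n) (hcard : Fintype.card V = 2 * n) :
    ∃ e : V ≃ Fin n × Bool, ∀ s : Finset V,
      s ∈ K.faces ↔ ∀ i : Fin n, ¬(e.symm (i, true) ∈ s ∧ e.symm (i, false) ∈ s) := by
  have hK := hpm.weakPseudomanifold
  choose a ha haunique using hK.existsUnique_nonadjacent hflag hcard
  have hfix (v : V) : a v ≠ v := (ha v).1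
  have hpair (u w : V) (huw : u ≠ w) : ({u, w} : Finset V) ∈ K.faces ↔ w ≠ a u :=
    ⟨fun h hw => (ha u).2 (hw ▸ h),
      fun hw => by_contra fun h => hw (haunique u w ⟨huw.symm, h⟩)⟩
  have hinv : Function.Involutive a := fun v =>
    (haunique (a v) v ⟨(hfix v).symm, by rw [Finset.pair_comm]; exact (ha v).2⟩).symm
  obtain ⟨e, he⟩ := hinv.exists_equiv_fin_prod_bool hfix hcard
  refine ⟨e, fun s => (hflag.mem_faces_iff_of_antipode hfix hpair s).trans ?_⟩
  simp only [e.symm.surjective.forall, he, Prod.forall, Bool.forall_bool, Bool.not_false,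
    Bool.not_true, not_and]
  exact forall_congr' fun i => ⟨And.right, fun h => ⟨fun hf ht => h ht hf, h⟩⟩

/-- A flag simplicial complex which is a closed pseudomanifold of dimension `n - 1` and
has exactly `2n` vertices is isomorphic to the boundary complex of the `n`-dimensional
crosspolytope: there is a bijection of the vertices with `Fin n × Bool` under which the
faces are exactly the vertex sets containing no antipodal pair.  Dually: a flag simple
convex `n`-polytope with exactly `2n` facets is combinatorially equivalent to the
`n`-cube. -/
theorem flag_pseudomanifold_card_eq_is_crosspolytope (V : Type*) [DecidableEq V]
    [Fintype V] (n : ℕ) (hn : 1 ≤ n) (K : SimplicialCx V)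
    (hflag : K.Flag) (hpm : K.Pseudomanifold n) (hcard : Fintype.card V = 2 * n) :
    ∃ e : V ≃ Fin n × Bool, ∀ s : Finset V,
      s ∈ K.faces ↔ ∀ i : Fin n, ¬(e.symm (i, true) ∈ s ∧ e.symm (i, false) ∈ s) :=
  flag_pseudomanifold_card_eq_is_crosspolytope_general V n K hflag hpm hcard
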